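/- For any δ > 0 there exists c₀ > 0 such that for all c ≥ c₀, the function φ(s) = (log(c + s⁻¹))^{-(1+δ)} for s > 0 (with φ(0) = 0) belongs to the Dini class 𝒟: φ² is concave on (0,∞), φ is increasing, and ∫₀¹ φ(s)/s ds < ∞. -/

import Mathlib

open Set MeasureTheory Real

private lemma concaveOn_congr_aux {s : Set ℝ} {f g : ℝ → ℝ} (hg : ConcaveOn ℝ s g)
    (h : ∀ x ∈ s, f x = g x) : ConcaveOn ℝ s f :=
  ⟨hg.1, fun x hx y hy a b ha hb hab => by
    rw [h x hx, h y hy, h _ (hg.1 hx hy ha hb hab)]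
    exact hg.2 hx hy ha hb hab⟩

/-- For any `δ > 0` there exists `c₀ > 0` such that for all `c ≥ c₀`, the function
`φ(s) = (log (c + s⁻¹))^{-(1+δ)}` for `s > 0` (with `φ(0) = 0`) belongs to the Dini
class: `φ²` is concave on `(0,∞)`, `φ` is increasing on `[0,∞)`, and
`∫₀¹ φ(s)/s ds < ∞`. -/
theorem log_power_mem_Dini_class (δ : ℝ) (hδ : 0 < δ) :
    ∃ c₀ > (0:ℝ), ∀ c ≥ c₀,
      (ConcaveOn ℝ (Ioi (0:ℝ))
        (fun s : ℝ => ((if s = 0 then 0 else (Real.log (c + s⁻¹)) ^ (-(1+δ))) : ℝ) ^ 2)) ∧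
      MonotoneOn (fun s : ℝ => (if s = 0 then 0 else (Real.log (c + s⁻¹)) ^ (-(1+δ)) : ℝ))
        (Ici (0:ℝ)) ∧
      IntegrableOn
        (fun s : ℝ => (if s = 0 then 0 else (Real.log (c + s⁻¹)) ^ (-(1+δ)) : ℝ) / s)
        (Ioc (0:ℝ) 1) := by
  refine ⟨Real.exp (3 + 2*δ), Real.exp_pos _, fun c hc => ?_⟩
  have hc1 : (1:ℝ) < c := lt_of_lt_of_le (Real.one_lt_exp_iff.mpr (by linarith)) hc
  have hcpos : (0:ℝ) < c := by linarith
  have hlogc : 3 + 2*δ ≤ Real.log c := by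
    rw [← Real.log_exp (3 + 2*δ)]
    exact Real.log_le_log (Real.exp_pos _) hc
  have hub : ∀ x : ℝ, 0 < x → 3 + 2*δ ≤ Real.log (c + x⁻¹) := by
    intro x hx
    refine hlogc.trans (Real.log_le_log hcpos ?_)
    have : 0 < x⁻¹ := inv_pos.mpr hx
    linarith
  have hupos : ∀ x : ℝ, 0 < x → 0 < Real.log (c + x⁻¹) := by
    intro x hx
    have := hub x hx
    linarith
  have hvpos : ∀ x : ℝ, 0 < x → 0 < c + x⁻¹ := by
    intro x hx
    have : 0 < x⁻¹ := inv_pos.mpr hx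
    linarith
  -- derivative of the inner log
  have hD : ∀ x : ℝ, 0 < x →
      HasDerivAt (fun s : ℝ => Real.log (c + s⁻¹)) (-(x^2)⁻¹ / (c + x⁻¹)) x := by
    intro x hx
    have h1 : HasDerivAt (fun s : ℝ => c + s⁻¹) (-(x^2)⁻¹) x :=
      (hasDerivAt_inv hx.ne').const_add c
    exact h1.log (hvpos x hx).ne'
  refine ⟨?_, ?_, ?_⟩
  · -- Concavity of φ²
    set g : ℝ → ℝ := fun s => Real.log (c + s⁻¹) ^ (-(2+2*δ)) with hgdef
    set G1 : ℝ → ℝ := fun x => -(x^2)⁻¹ / (c + x⁻¹) * (-(2+2*δ)) *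
      Real.log (c + x⁻¹) ^ (-(2+2*δ) - 1) with hG1def
    set G2 : ℝ → ℝ := fun x => -((2+2*δ) * Real.log (c + x⁻¹) ^ (-(2+2*δ) - 2) *
      ((c + x⁻¹)⁻¹)^2 * (x⁻¹)^4 * ((2*c*x + 1) * Real.log (c + x⁻¹) - (3 + 2*δ))) with hG2def
    have hg1 : ∀ x : ℝ, 0 < x → HasDerivAt g (G1 x) x := by
      intro x hx
      exact (hD x hx).rpow_const (Or.inl (hupos x hx).ne')
    have hg2 : ∀ x : ℝ, 0 < x → HasDerivAt G1 (G2 x) x := by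
      intro x hx
      have hx2 : (x:ℝ)^2 ≠ 0 := pow_ne_zero 2 hx.ne'
      have hv := hvpos x hx
      have hu := hupos x hx
      have hN : HasDerivAt (fun s : ℝ => -(s^2)⁻¹) (-(-(↑(2:ℕ) * x ^ (2-1)) / (x^2)^2)) x :=
        ((hasDerivAt_pow 2 x).inv hx2).neg
      have hV : HasDerivAt (fun s : ℝ => c + s⁻¹) (-(x^2)⁻¹) x :=
        (hasDerivAt_inv hx.ne').const_add c
      have hW : HasDerivAt (fun s : ℝ => -(s^2)⁻¹ / (c + s⁻¹))
          ((-(-(↑(2:ℕ) * x ^ (2-1)) / (x^2)^2) * (c + x⁻¹) - (-(x^2)⁻¹) * (-(x^2)⁻¹)) /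
            (c + x⁻¹)^2) x := hN.div hV hv.ne'
      have hA : HasDerivAt (fun s : ℝ => Real.log (c + s⁻¹) ^ (-(2+2*δ) - 1))
          (-(x^2)⁻¹ / (c + x⁻¹) * (-(2+2*δ) - 1) * Real.log (c + x⁻¹) ^ (-(2+2*δ) - 1 - 1)) x :=
        (hD x hx).rpow_const (Or.inl hu.ne')
      have h := (hW.mul_const (-(2+2*δ))).mul hA
      convert h using 1
      case e'_4 => rfl
      case e'_5 => rfl
      case e'_8 => rfl
      have he1 : (-(2+2*δ) - 1 : ℝ) = (-(2+2*δ) - 2) + 1 := by ring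
      have he2 : (-(2+2*δ) - 1 - 1 : ℝ) = -(2+2*δ) - 2 := by ring
      rw [hG2def]
      simp only [he2]
      rw [he1, Real.rpow_add_one hu.ne']
      field_simp
      ring
    have hgc : ConcaveOn ℝ (Ioi (0:ℝ)) g := by
      apply concaveOn_of_hasDerivWithinAt2_nonpos (convex_Ioi 0) (f' := G1) (f'' := G2)
      · exact fun x hx => ((hg1 x hx).continuousAt).continuousWithinAt
      · rw [interior_Ioi]
        exact fun x hx => (hg1 x hx).hasDerivWithinAt
      · rw [interior_Ioi]
        exact fun x hx => (hg2 x hx).hasDerivWithinAt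
      · rw [interior_Ioi]
        intro x hx
        have hu := hupos x hx
        have hub' := hub x hx
        have hbr : 0 ≤ (2*c*x + 1) * Real.log (c + x⁻¹) - (3 + 2*δ) := by
          nlinarith [mul_nonneg (mul_nonneg (by norm_num : (0:ℝ) ≤ 2) hcpos.le) hx.le,
            mul_nonneg (mul_nonneg (mul_nonneg (by norm_num : (0:ℝ) ≤ 2) hcpos.le) hx.le) hu.le]
        have hpow : (0:ℝ) ≤ Real.log (c + x⁻¹) ^ (-(2+2*δ) - 2) :=
          (Real.rpow_pos_of_pos hu _).le
        have hprod : 0 ≤ (2+2*δ) * Real.log (c + x⁻¹) ^ (-(2+2*δ) - 2) *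
            ((c + x⁻¹)⁻¹)^2 * (x⁻¹)^4 * ((2*c*x + 1) * Real.log (c + x⁻¹) - (3 + 2*δ)) := by
          have h1 : (0:ℝ) ≤ 2 + 2*δ := by linarith
          have h2 : (0:ℝ) ≤ ((c + x⁻¹)⁻¹)^2 := sq_nonneg _
          have h3 : (0:ℝ) ≤ (x⁻¹)^4 := by positivity
          exact mul_nonneg (mul_nonneg (mul_nonneg (mul_nonneg h1 hpow) h2) h3) hbr
        rw [hG2def]
        simpa using neg_nonpos.mpr hprod
    apply concaveOn_congr_aux hgc
    intro s hs
    have hs' : (0:ℝ) < s := hs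
    rw [if_neg hs'.ne']
    rw [sq, ← Real.rpow_add (hupos s hs'), hgdef]
    norm_num
    ring_nf
  · -- Monotonicity
    intro x hx y hy hxy
    simp only
    by_cases hx0 : x = 0
    · subst hx0
      rw [if_pos rfl]
      by_cases hy0 : y = 0
      · rw [if_pos hy0]
      · rw [if_neg hy0]
        have hy' : 0 < y := lt_of_le_of_ne hy (Ne.symm hy0)
        exact Real.rpow_nonneg (hupos y hy').le _
    · have hx' : 0 < x := lt_of_le_of_ne hx (Ne.symm hx0)
      have hy' : 0 < y := lt_of_lt_of_le hx' hxy
      rw [if_neg hx0, if_neg hy'.ne']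
      have hlog : Real.log (c + y⁻¹) ≤ Real.log (c + x⁻¹) := by
        apply Real.log_le_log (hvpos y hy')
        have : y⁻¹ ≤ x⁻¹ := by
          apply inv_anti₀ hx' hxy
        linarith
      exact Real.rpow_le_rpow_of_nonpos (hupos y hy') hlog (by linarith)
  · -- Integrability
    set f₀ : ℝ → ℝ := fun s => Real.log (c + s⁻¹) ^ (-(1+δ)) / s with hf₀def
    have hcont : ∀ s : ℝ, 0 < s → ContinuousAt f₀ s := by
      intro s hs
      exact ContinuousAt.div
        (((hD s hs).rpow_const (Or.inl (hupos s hs).ne')).continuousAt)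
        continuousAt_id hs.ne'
    have hhigh : IntegrableOn f₀ (Ioc (1/2 : ℝ) 1) := by
      have : IntegrableOn f₀ (Icc (1/2 : ℝ) 1) := by
        apply ContinuousOn.integrableOn_Icc
        exact fun s hs => (hcont s (by linarith [hs.1])).continuousWithinAt
      exact this.mono_set Ioc_subset_Icc_self
    have hlow : IntegrableOn f₀ (Ioc (0:ℝ) (1/2)) := by
      set Fd : ℝ → ℝ := fun x => (-Real.log x) ^ (-(1+δ)) / x with hFddef
      have hlogneg : ∀ x : ℝ, 0 < x → x ≤ 1/2 → 0 < -Real.log x := by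
        intro x hx hx2
        have : Real.log x < Real.log 1 := Real.log_lt_log hx (by linarith)
        simp only [Real.log_one] at this
        linarith
      have hFdint : IntegrableOn Fd (Ioc (0:ℝ) (1/2)) := by
        apply intervalIntegral.integrableOn_deriv_of_nonneg
          (g := fun x => (1/δ) * (-Real.log x) ^ (-δ))
        · -- continuity on Icc 0 (1/2)
          intro x hx
          rcases eq_or_lt_of_le hx.1 with h0 | h0
          · -- x = 0
            rw [← h0]
            have hF0 : (1/δ) * (-Real.log (0:ℝ)) ^ (-δ) = 0 := by
              rw [Real.log_zero, neg_zero, Real.zero_rpow (by linarith : -δ ≠ 0), mul_zero]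
            have htend : Filter.Tendsto (fun x : ℝ => (1/δ) * (-Real.log x) ^ (-δ))
                (nhdsWithin 0 (Ioi 0)) (nhds 0) := by
              have h1 : Filter.Tendsto (fun x : ℝ => -Real.log x)
                  (nhdsWithin 0 (Ioi 0)) Filter.atTop :=
                Filter.tendsto_neg_atTop_iff.mpr Real.tendsto_log_nhdsGT_zero
              have h2 := (tendsto_rpow_neg_atTop hδ).comp h1
              have h3 := h2.const_mul (1/δ)
              simpa using h3
            have : ContinuousWithinAt (fun x : ℝ => (1/δ) * (-Real.log x) ^ (-δ))
                (Ioi (0:ℝ)) 0 := by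
              show Filter.Tendsto (fun x : ℝ => (1/δ) * (-Real.log x) ^ (-δ))
                (nhdsWithin 0 (Ioi 0)) (nhds ((1/δ) * (-Real.log (0:ℝ)) ^ (-δ)))
              rw [hF0]
              exact htend
            have h4 : ContinuousWithinAt (fun x : ℝ => (1/δ) * (-Real.log x) ^ (-δ))
                (insert (0:ℝ) (Ioi 0)) 0 := continuousWithinAt_insert_self.mpr this
            rw [Ioi_insert] at h4
            exact h4.mono Icc_subset_Ici_self
          · have hne : -Real.log x ≠ 0 := (hlogneg x h0 hx.2).ne'
            have : ContinuousAt (fun x : ℝ => (1/δ) * (-Real.log x) ^ (-δ)) x :=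
              (((Real.continuousAt_log h0.ne').neg).rpow_const (Or.inl hne)).const_mul _
            exact this.continuousWithinAt
        · intro x hx
          have hne : -Real.log x ≠ 0 := (hlogneg x hx.1 hx.2.le).ne'
          have h := (((Real.hasDerivAt_log hx.1.ne').neg).rpow_const
            (p := -δ) (Or.inl hne)).const_mul (1/δ)
          convert h using 1
          case e'_4 => rfl
          case e'_5 => rfl
          case e'_8 => rfl
          have he : (-δ - 1 : ℝ) = -(1+δ) := by ring
          rw [hFddef]
          simp only [← he]
          field_simp
          rfl
        · intro x hx
          exact div_nonneg (Real.rpow_nonneg (hlogneg x hx.1 hx.2.le).le _) hx.1.le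
      apply hFdint.mono' ?_ ?_
      · exact (ContinuousOn.aestronglyMeasurable
          (fun s hs => (hcont s hs.1).continuousWithinAt) measurableSet_Ioc)
      · rw [ae_restrict_iff' measurableSet_Ioc]
        apply Filter.Eventually.of_forall
        intro s hs
        have hs1 := hs.1
        have hlg := hlogneg s hs.1 hs.2
        have hle : -Real.log s ≤ Real.log (c + s⁻¹) := by
          rw [← Real.log_inv]
          apply Real.log_le_log (inv_pos.mpr hs.1)
          linarith
        have hf0nn : 0 ≤ f₀ s :=
          div_nonneg (Real.rpow_nonneg (hupos s hs.1).le _) hs.1.le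
        rw [Real.norm_of_nonneg hf0nn]
        have hkey : Real.log (c + s⁻¹) ^ (-(1+δ)) ≤ (-Real.log s) ^ (-(1+δ)) :=
          Real.rpow_le_rpow_of_nonpos hlg hle (by linarith)
        simp only [hf₀def, hFddef]
        gcongr
    have hunion : IntegrableOn f₀ (Ioc (0:ℝ) 1) := by
      have := hlow.union hhigh
      rwa [Ioc_union_Ioc_eq_Ioc (by norm_num : (0:ℝ) ≤ 1/2) (by norm_num : (1/2:ℝ) ≤ 1)] at this
    apply hunion.congr_fun ?_ measurableSet_Ioc
    intro s hs
    rw [hf₀def]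
    simp only [if_neg hs.1.ne']
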